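/- Let H₁ and H₂ be finite-dimensional ℂ-vector spaces with conjugate-linear involutions σ₁ and σ₂ respectively, and let (I₁^{p,q}) and (I₂^{p,q}) be bigradings of H₁ and H₂, each satisfying the conjugation condition with respect to σ₁, respectively σ₂. Let σ be the conjugate-linear involution of H₁ ⊗_ℂ H₂ characterized by σ(v ⊗ w) = σ₁(v) ⊗ σ₂(w) for all v ∈ H₁, w ∈ H₂ (together with additivity and σ(c·t) = (conj c)·σ(t)). For (p,q) ∈ ℤ² set T^{p,q} := Σ_{p₁+p₂=p, q₁+q₂=q} I₁^{p₁,q₁} ⊗ I₂^{p₂,q₂}, the ℂ-span in H₁ ⊗_ℂ H₂ of the elementary tensors v ⊗ w with v ∈ I₁^{p₁,q₁}, w ∈ I₂^{p₂,q₂}, p₁ + p₂ = p and q₁ + q₂ = q. Then (T^{p,q}) is a bigrading of H₁ ⊗_ℂ H₂ and it satisfies the conjugation condition with respect to σ. -/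

import Mathlib

open scoped TensorProduct

noncomputable section

/-- A conjugate-linear involution of a complex vector space `H`: an additive map `σ`
with `σ (c • v) = (conj c) • σ v` and `σ ∘ σ = id`. -/
structure ConjInv (H : Type) [AddCommGroup H] [Module ℂ H] where
  toFun : H → H
  map_add' : ∀ x y : H, toFun (x + y) = toFun x + toFun y
  map_smul' : ∀ (c : ℂ) (x : H), toFun (c • x) = (starRingEnd ℂ) c • toFun x
  invol' : ∀ x : H, toFun (toFun x) = x

variable {H : Type} [AddCommGroup H] [Module ℂ H]

/-- A bigrading of a complex vector space `H`: a family `I^{p,q}` of `ℂ`-subspaces,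
only finitely many nonzero, with `H = ⊕_{p,q} I^{p,q}` (internal direct sum). -/
structure IsBigrading (I : ℤ × ℤ → Submodule ℂ H) : Prop where
  finite : {pq : ℤ × ℤ | I pq ≠ ⊥}.Finite
  internal : DirectSum.IsInternal I

/-- The subspace `⊕_{r<p, s<q} I^{r,s}`. -/
def lowerPieces (I : ℤ × ℤ → Submodule ℂ H) (p q : ℤ) : Submodule ℂ H :=
  ⨆ rs ∈ {rs : ℤ × ℤ | rs.1 < p ∧ rs.2 < q}, I rs

/-- The conjugation condition with respect to a conjugate-linear involution `σ`:
for all `(p,q)`, the images of `I^{p,q}` and of `σ(I^{q,p})` in the quotient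
`H / ⊕_{r<p,s<q} I^{r,s}` coincide. -/
def ConjCondition (σ : ConjInv H) (I : ℤ × ℤ → Submodule ℂ H) : Prop :=
  ∀ p q : ℤ,
    I (p, q) ⊔ lowerPieces I p q
      = Submodule.span ℂ (σ.toFun '' (I (q, p) : Set H)) ⊔ lowerPieces I p q

/-- The piece `T^{p,q} = Σ_{p₁+p₂=p, q₁+q₂=q} I₁^{p₁,q₁} ⊗ I₂^{p₂,q₂}` of the tensor
product: the `ℂ`-span of the elementary tensors `v ⊗ w` with `v ∈ I₁^{p₁,q₁}`,
`w ∈ I₂^{p₂,q₂}`, `p₁ + p₂ = p` and `q₁ + q₂ = q`. -/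
def tensorPiece {H₁ H₂ : Type} [AddCommGroup H₁] [Module ℂ H₁]
    [AddCommGroup H₂] [Module ℂ H₂]
    (I₁ : ℤ × ℤ → Submodule ℂ H₁) (I₂ : ℤ × ℤ → Submodule ℂ H₂)
    (pq : ℤ × ℤ) : Submodule ℂ (H₁ ⊗[ℂ] H₂) :=
  Submodule.span ℂ
    {t : H₁ ⊗[ℂ] H₂ | ∃ (p₁ q₁ p₂ q₂ : ℤ) (v : H₁) (w : H₂),
      v ∈ I₁ (p₁, q₁) ∧ w ∈ I₂ (p₂, q₂) ∧ p₁ + p₂ = pq.1 ∧ q₁ + q₂ = pq.2 ∧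
      t = v ⊗ₜ[ℂ] w}

/-!
The projections `π₁ a ⊗ π₂ b` onto the summands `I₁ a ⊗ I₂ b` show that these summands are
independent; grouping them by `a + b` gives the bigrading `T`. For the conjugation condition
write `W` for lower pieces: from `I₁ a ≡ σ₁ (I₁ a.swap)` modulo `W₁ a` and
`I₂ b ≡ σ₂ (I₂ b.swap)` modulo `W₂ b` one gets `I₁ a ⊗ I₂ b ≡ σ (I₁ a.swap ⊗ I₂ b.swap)` modulo
the cross terms `(I₁ a + W₁ a) ⊗ W₂ b` and `W₁ a ⊗ (I₂ b + W₂ b)`. These lie in the lower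
pieces of `T` at `a + b`, since an index weakly below `a` plus one strictly below `b` is strictly
below `a + b`. Summing over `a + b = (p, q)`, reindexed by swapping, gives the condition for `T`.
-/

open Submodule

theorem iSupIndep_of_projections {R M ι : Type*} [Semiring R] [AddCommMonoid M] [Module R M]
    {N : ι → Submodule R M} (π : ι → M →ₗ[R] M)
    (h_id : ∀ i, N i ≤ LinearMap.eqLocus (π i) LinearMap.id)
    (h_zero : ∀ i j, j ≠ i → N j ≤ LinearMap.ker (π i)) :
    iSupIndep N := by
  intro i
  rw [disjoint_def]
  intro x hx hx'
  have hker : (⨆ (j) (_ : j ≠ i), N j) ≤ LinearMap.ker (π i) := iSup₂_le (h_zero i)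
  calc x = π i x := (h_id i hx).symm
    _ = 0 := hker hx'

theorem iSupIndep.iSup_of_uncurry {α ι κ : Type*} [CompleteLattice α] [IsModularLattice α]
    [IsCompactlyGenerated α] {t : ι → κ → α} (ht : iSupIndep (Function.uncurry t)) :
    iSupIndep fun k => ⨆ i, t i k := by
  intro k
  refine (ht.disjoint_biSup_biSup (s := {p : ι × κ | p.2 = k}) (t := {p : ι × κ | p.2 ≠ k})
    (Set.disjoint_left.2 fun _ h h' => h' h)).mono ?_ ?_
  · exact iSup_le fun i =>
      le_biSup (Function.uncurry t) (show (i, k) ∈ {p : ι × κ | p.2 = k} from rfl)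
  · exact iSup₂_le fun k' hk' => iSup_le fun i =>
      le_biSup (Function.uncurry t) (show (i, k') ∈ {p : ι × κ | p.2 ≠ k} from hk')

theorem iSup_sup_eq_iSup_sup_of_forall {α ι : Type*} [CompleteLattice α] {x y : ι → α} {w : α}
    (h : ∀ i, x i ⊔ w = y i ⊔ w) : (⨆ i, x i) ⊔ w = (⨆ i, y i) ⊔ w := by
  have key : ∀ x y : ι → α, (∀ i, x i ⊔ w = y i ⊔ w) → (⨆ i, x i) ⊔ w ≤ (⨆ i, y i) ⊔ w :=
    fun x y h => sup_le (iSup_le fun i => le_sup_left.trans <|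
      (h i).le.trans (sup_le_sup_right (le_iSup y i) w)) le_sup_right
  exact le_antisymm (key x y h) (key y x fun i => (h i).symm)

namespace DirectSum.IsInternal

variable {R M ι : Type*} [Ring R] [AddCommGroup M] [Module R M] [DecidableEq ι]
  {N : ι → Submodule R M}

theorem isCompl_iSup_ne (h : IsInternal N) (i : ι) : IsCompl (N i) (⨆ (j) (_ : j ≠ i), N j) :=
  ⟨h.submodule_iSupIndep i,
    codisjoint_iff.2 (by rw [← iSup_split_single, h.submodule_iSup_eq_top])⟩

theorem projection_apply_of_mem_ne (h : IsInternal N) {i j : ι} (hji : j ≠ i) {x : M}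
    (hx : x ∈ N j) : (N i).projection _ (h.isCompl_iSup_ne i) x = 0 :=
  projection_apply_of_mem_right _ <| le_iSup₂ (f := fun j (_ : j ≠ i) => N j) j hji hx

theorem iSupIndep_map₂_mk {R M₁ M₂ ι κ : Type*} [CommRing R] [AddCommGroup M₁] [Module R M₁]
    [AddCommGroup M₂] [Module R M₂] [DecidableEq ι] [DecidableEq κ]
    {N₁ : ι → Submodule R M₁} {N₂ : κ → Submodule R M₂}
    (h₁ : IsInternal N₁) (h₂ : IsInternal N₂) :
    iSupIndep fun ij : ι × κ => map₂ (TensorProduct.mk R M₁ M₂) (N₁ ij.1) (N₂ ij.2) := by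
  let P₁ i := (N₁ i).projection _ (h₁.isCompl_iSup_ne i)
  let P₂ j := (N₂ j).projection _ (h₂.isCompl_iSup_ne j)
  refine iSupIndep_of_projections (fun ij => TensorProduct.map (P₁ ij.1) (P₂ ij.2))
    (fun ij => map₂_le.2 fun v hv w hw => ?_) (fun ij ij' hne => map₂_le.2 fun v hv w hw => ?_)
  · simp [LinearMap.mem_eqLocus, P₁, P₂, projection_apply_of_mem_left _ hv,
      projection_apply_of_mem_left _ hw]
  · rw [LinearMap.mem_ker, TensorProduct.mk_apply, TensorProduct.map_tmul]
    rcases eq_or_ne ij'.1 ij.1 with h | h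
    · have h' : ij'.2 ≠ ij.2 := fun h' => hne (Prod.ext h h')
      rw [h₂.projection_apply_of_mem_ne h' hw, TensorProduct.tmul_zero]
    · rw [h₁.projection_apply_of_mem_ne h hv, TensorProduct.zero_tmul]

end DirectSum.IsInternal

theorem Submodule.map₂_sup_eq_map₂_sup {R M N P : Type*} [CommSemiring R] [AddCommMonoid M]
    [AddCommMonoid N] [AddCommMonoid P] [Module R M] [Module R N] [Module R P]
    (f : M →ₗ[R] N →ₗ[R] P) {X₁ Y₁ W₁ : Submodule R M} {X₂ Y₂ W₂ : Submodule R N}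
    {W : Submodule R P} (h₁ : X₁ ⊔ W₁ = Y₁ ⊔ W₁) (h₂ : X₂ ⊔ W₂ = Y₂ ⊔ W₂)
    (hW₂ : map₂ f (X₁ ⊔ W₁) W₂ ≤ W) (hW₁ : map₂ f W₁ (X₂ ⊔ W₂) ≤ W) :
    map₂ f X₁ X₂ ⊔ W = map₂ f Y₁ Y₂ ⊔ W := by
  have key : ∀ {X₁ Y₁ : Submodule R M} {X₂ Y₂ : Submodule R N}, X₁ ⊔ W₁ = Y₁ ⊔ W₁ →
      X₂ ⊔ W₂ = Y₂ ⊔ W₂ → map₂ f (Y₁ ⊔ W₁) W₂ ≤ W → map₂ f W₁ (Y₂ ⊔ W₂) ≤ W →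
      map₂ f X₁ X₂ ≤ map₂ f Y₁ Y₂ ⊔ W := by
    intro X₁ Y₁ X₂ Y₂ h₁ h₂ hW₂ hW₁
    calc map₂ f X₁ X₂ ≤ map₂ f (Y₁ ⊔ W₁) (Y₂ ⊔ W₂) :=
          map₂_le_map₂ (h₁ ▸ le_sup_left) (h₂ ▸ le_sup_left)
      _ = map₂ f Y₁ Y₂ ⊔ map₂ f Y₁ W₂ ⊔ map₂ f W₁ (Y₂ ⊔ W₂) := by
          rw [map₂_sup_left, map₂_sup_right]
      _ ≤ map₂ f Y₁ Y₂ ⊔ W :=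
          sup_le (sup_le_sup_left ((map₂_le_map₂_left le_sup_left).trans hW₂) _)
            (hW₁.trans le_sup_right)
  refine le_antisymm (sup_le (key h₁ h₂ ?_ ?_) le_sup_right)
    (sup_le (key h₁.symm h₂.symm hW₂ hW₁) le_sup_right)
  · rwa [← h₁]
  · rwa [← h₂]

def ConjInv.toSemilinearMap (σ : ConjInv H) : H →ₛₗ[starRingEnd ℂ] H :=
  { toFun := σ.toFun, map_add' := σ.map_add', map_smul' := σ.map_smul' }

theorem ConjInv.span_image_eq_map (σ : ConjInv H) (A : Submodule ℂ H) :
    span ℂ (σ.toFun '' A) = A.map σ.toSemilinearMap := by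
  rw [← span_eq (A.map σ.toSemilinearMap), map_coe]
  rfl

theorem conjCondition_iff {σ : ConjInv H} {I : ℤ × ℤ → Submodule ℂ H} :
    ConjCondition σ I ↔ ∀ a : ℤ × ℤ,
      I a ⊔ lowerPieces I a.1 a.2 = (I a.swap).map σ.toSemilinearMap ⊔ lowerPieces I a.1 a.2 := by
  simp only [ConjCondition, ConjInv.span_image_eq_map]
  exact ⟨fun h a => h a.1 a.2, fun h p q => h (p, q)⟩

theorem ConjInv.map_map₂_mk {H₁ H₂ : Type} [AddCommGroup H₁] [Module ℂ H₁] [AddCommGroup H₂]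
    [Module ℂ H₂] {σ₁ : ConjInv H₁} {σ₂ : ConjInv H₂} {σ : ConjInv (H₁ ⊗[ℂ] H₂)}
    (hσ : ∀ (v : H₁) (w : H₂), σ.toFun (v ⊗ₜ[ℂ] w) = σ₁.toFun v ⊗ₜ[ℂ] σ₂.toFun w)
    (A : Submodule ℂ H₁) (B : Submodule ℂ H₂) :
    (map₂ (TensorProduct.mk ℂ H₁ H₂) A B).map σ.toSemilinearMap
      = map₂ (TensorProduct.mk ℂ H₁ H₂) (A.map σ₁.toSemilinearMap) (B.map σ₂.toSemilinearMap) := by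
  rw [map₂_eq_span_image2, map_span, map₂_eq_span_image2, Set.image_image2, map_coe, map_coe,
    Set.image2_image_left, Set.image2_image_right]
  exact congrArg _ (Set.image2_congr fun v _ w _ => hσ v w)

theorem sup_lowerPieces_le_biSup_Iic (I : ℤ × ℤ → Submodule ℂ H) (a : ℤ × ℤ) :
    I a ⊔ lowerPieces I a.1 a.2 ≤ ⨆ r ∈ Set.Iic a, I r :=
  sup_le (le_biSup I (Set.mem_Iic.2 le_rfl))
    (biSup_mono fun _ hr => Prod.le_def.2 ⟨hr.1.le, hr.2.le⟩)

section TensorPiece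

variable {H₁ H₂ : Type} [AddCommGroup H₁] [Module ℂ H₁] [AddCommGroup H₂] [Module ℂ H₂]
  (I₁ : ℤ × ℤ → Submodule ℂ H₁) (I₂ : ℤ × ℤ → Submodule ℂ H₂)

theorem tensorPiece_eq_iSup (pq : ℤ × ℤ) :
    tensorPiece I₁ I₂ pq = ⨆ a, map₂ (TensorProduct.mk ℂ H₁ H₂) (I₁ a) (I₂ (pq - a)) := by
  apply le_antisymm
  · obtain ⟨p, q⟩ := pq
    refine span_le.2 ?_
    rintro _ ⟨p₁, q₁, p₂, q₂, v, w, hv, hw, rfl, rfl, rfl⟩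
    refine mem_iSup_of_mem (p₁, q₁) (apply_mem_map₂ _ hv ?_)
    rwa [Prod.mk_sub_mk, add_sub_cancel_left, add_sub_cancel_left]
  · exact iSup_le fun a => map₂_le.2 fun v hv w hw =>
      subset_span ⟨a.1, a.2, (pq - a).1, (pq - a).2, v, w, hv, hw, by simp, by simp, rfl⟩

theorem map₂_mk_le_tensorPiece (a b : ℤ × ℤ) :
    map₂ (TensorProduct.mk ℂ H₁ H₂) (I₁ a) (I₂ b) ≤ tensorPiece I₁ I₂ (a + b) := by
  rw [tensorPiece_eq_iSup]
  exact le_iSup_of_le a (by rw [add_sub_cancel_left])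

theorem map₂_mk_biSup_le_biSup_tensorPiece {S₁ S₂ S : Set (ℤ × ℤ)}
    (h : ∀ r ∈ S₁, ∀ s ∈ S₂, r + s ∈ S) :
    map₂ (TensorProduct.mk ℂ H₁ H₂) (⨆ r ∈ S₁, I₁ r) (⨆ s ∈ S₂, I₂ s)
      ≤ ⨆ t ∈ S, tensorPiece I₁ I₂ t := by
  simp only [map₂_iSup_left, map₂_iSup_right]
  exact iSup₂_le fun s hs => iSup₂_le fun r hr =>
    (map₂_mk_le_tensorPiece I₁ I₂ r s).trans (le_biSup _ (h r hr s hs))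

theorem map₂_mk_biSup_Iic_lowerPieces_le (a b : ℤ × ℤ) :
    map₂ (TensorProduct.mk ℂ H₁ H₂) (⨆ r ∈ Set.Iic a, I₁ r) (lowerPieces I₂ b.1 b.2)
      ≤ lowerPieces (tensorPiece I₁ I₂) (a + b).1 (a + b).2 :=
  map₂_mk_biSup_le_biSup_tensorPiece I₁ I₂ fun _ hr _ hs =>
    ⟨add_lt_add_of_le_of_lt hr.1 hs.1, add_lt_add_of_le_of_lt hr.2 hs.2⟩

theorem map₂_mk_lowerPieces_biSup_Iic_le (a b : ℤ × ℤ) :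
    map₂ (TensorProduct.mk ℂ H₁ H₂) (lowerPieces I₁ a.1 a.2) (⨆ s ∈ Set.Iic b, I₂ s)
      ≤ lowerPieces (tensorPiece I₁ I₂) (a + b).1 (a + b).2 :=
  map₂_mk_biSup_le_biSup_tensorPiece I₁ I₂ fun _ hr _ hs =>
    ⟨add_lt_add_of_lt_of_le hr.1 hs.1, add_lt_add_of_lt_of_le hr.2 hs.2⟩

theorem tensorPiece_ne_bot_finite (hf₁ : {a | I₁ a ≠ ⊥}.Finite) (hf₂ : {b | I₂ b ≠ ⊥}.Finite) :
    {pq | tensorPiece I₁ I₂ pq ≠ ⊥}.Finite := by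
  refine (hf₁.image2 (· + ·) hf₂).subset fun pq hpq => ?_
  by_contra hmem
  refine hpq ?_
  rw [tensorPiece_eq_iSup, iSup_eq_bot]
  intro a
  rcases eq_or_ne (I₁ a) ⊥ with ha | ha
  · rw [ha, map₂_bot_left]
  rcases eq_or_ne (I₂ (pq - a)) ⊥ with hb | hb
  · rw [hb, map₂_bot_right]
  exact (hmem ⟨a, ha, pq - a, hb, add_sub_cancel a pq⟩).elim

theorem iSup_tensorPiece_eq_top (h₁ : iSup I₁ = ⊤) (h₂ : iSup I₂ = ⊤) :
    ⨆ pq, tensorPiece I₁ I₂ pq = ⊤ := by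
  rw [eq_top_iff, ← TensorProduct.map₂_mk_top_top_eq_top, ← h₁, ← h₂, map₂_iSup_left]
  refine iSup_le fun a => ?_
  rw [map₂_iSup_right]
  exact iSup_le fun b => (map₂_mk_le_tensorPiece I₁ I₂ a b).trans (le_iSup _ (a + b))

variable {I₁ I₂}

theorem iSupIndep_tensorPiece (h₁ : DirectSum.IsInternal I₁) (h₂ : DirectSum.IsInternal I₂) :
    iSupIndep (tensorPiece I₁ I₂) := by
  have hshear : Function.Injective fun x : (ℤ × ℤ) × (ℤ × ℤ) => (x.1, x.2 - x.1) :=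
    fun x y h => Prod.ext (Prod.mk.inj h).1
      (by simpa [(Prod.mk.inj h).1] using (Prod.mk.inj h).2)
  have hJ := (h₁.iSupIndep_map₂_mk h₂).comp hshear
  rw [show tensorPiece I₁ I₂ = fun pq => ⨆ a,
      map₂ (TensorProduct.mk ℂ H₁ H₂) (I₁ a) (I₂ (pq - a)) from funext (tensorPiece_eq_iSup I₁ I₂)]
  exact iSupIndep.iSup_of_uncurry hJ

theorem isBigrading_tensorPiece (h₁ : IsBigrading I₁) (h₂ : IsBigrading I₂) :
    IsBigrading (tensorPiece I₁ I₂) :=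
  ⟨tensorPiece_ne_bot_finite I₁ I₂ h₁.finite h₂.finite,
    DirectSum.isInternal_submodule_of_iSupIndep_of_iSup_eq_top
      (iSupIndep_tensorPiece h₁.internal h₂.internal)
      (iSup_tensorPiece_eq_top I₁ I₂ h₁.internal.submodule_iSup_eq_top
        h₂.internal.submodule_iSup_eq_top)⟩

variable {σ₁ : ConjInv H₁} {σ₂ : ConjInv H₂} {σ : ConjInv (H₁ ⊗[ℂ] H₂)}

theorem map₂_mk_sup_lowerPieces_tensorPiece_eq (hc₁ : ConjCondition σ₁ I₁)
    (hc₂ : ConjCondition σ₂ I₂)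
    (hσ : ∀ (v : H₁) (w : H₂), σ.toFun (v ⊗ₜ[ℂ] w) = σ₁.toFun v ⊗ₜ[ℂ] σ₂.toFun w)
    (a b : ℤ × ℤ) :
    map₂ (TensorProduct.mk ℂ H₁ H₂) (I₁ a) (I₂ b)
        ⊔ lowerPieces (tensorPiece I₁ I₂) (a + b).1 (a + b).2
      = (map₂ (TensorProduct.mk ℂ H₁ H₂) (I₁ a.swap) (I₂ b.swap)).map σ.toSemilinearMap
        ⊔ lowerPieces (tensorPiece I₁ I₂) (a + b).1 (a + b).2 := by
  rw [ConjInv.map_map₂_mk hσ]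
  exact map₂_sup_eq_map₂_sup _ (conjCondition_iff.1 hc₁ a) (conjCondition_iff.1 hc₂ b)
    ((map₂_le_map₂_left (sup_lowerPieces_le_biSup_Iic I₁ a)).trans
      (map₂_mk_biSup_Iic_lowerPieces_le I₁ I₂ a b))
    ((map₂_le_map₂_right (sup_lowerPieces_le_biSup_Iic I₂ b)).trans
      (map₂_mk_lowerPieces_biSup_Iic_le I₁ I₂ a b))

theorem conjCondition_tensorPiece (hc₁ : ConjCondition σ₁ I₁) (hc₂ : ConjCondition σ₂ I₂)
    (hσ : ∀ (v : H₁) (w : H₂), σ.toFun (v ⊗ₜ[ℂ] w) = σ₁.toFun v ⊗ₜ[ℂ] σ₂.toFun w) :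
    ConjCondition σ (tensorPiece I₁ I₂) := by
  refine conjCondition_iff.2 fun pq => ?_
  have hswap : (tensorPiece I₁ I₂ pq.swap).map σ.toSemilinearMap
      = ⨆ a, (map₂ (TensorProduct.mk ℂ H₁ H₂) (I₁ a.swap) (I₂ (pq - a).swap)).map
          σ.toSemilinearMap := by
    rw [tensorPiece_eq_iSup, Submodule.map_iSup]
    exact (Equiv.iSup_comp (Equiv.prodComm ℤ ℤ)).symm
  rw [hswap, tensorPiece_eq_iSup]
  refine iSup_sup_eq_iSup_sup_of_forall fun a => ?_
  have := map₂_mk_sup_lowerPieces_tensorPiece_eq hc₁ hc₂ hσ a (pq - a)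
  rwa [add_sub_cancel] at this

end TensorPiece

theorem tensorPiece_isBigrading_and_conjCondition_general
    (H₁ H₂ : Type) [AddCommGroup H₁] [Module ℂ H₁]
    [AddCommGroup H₂] [Module ℂ H₂]
    (σ₁ : ConjInv H₁) (σ₂ : ConjInv H₂)
    (I₁ : ℤ × ℤ → Submodule ℂ H₁) (I₂ : ℤ × ℤ → Submodule ℂ H₂)
    (h₁ : IsBigrading I₁) (hc₁ : ConjCondition σ₁ I₁)
    (h₂ : IsBigrading I₂) (hc₂ : ConjCondition σ₂ I₂)
    (σ : ConjInv (H₁ ⊗[ℂ] H₂))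
    (hσ : ∀ (v : H₁) (w : H₂), σ.toFun (v ⊗ₜ[ℂ] w) = σ₁.toFun v ⊗ₜ[ℂ] σ₂.toFun w) :
    IsBigrading (tensorPiece I₁ I₂) ∧ ConjCondition σ (tensorPiece I₁ I₂) :=
  ⟨isBigrading_tensorPiece h₁ h₂, conjCondition_tensorPiece hc₁ hc₂ hσ⟩

/-- the tensor product of two bigradings satisfying the conjugation
condition is a bigrading of the tensor product satisfying the conjugation condition
with respect to the induced involution `σ = σ₁ ⊗ σ₂`. -/
theorem tensorPiece_isBigrading_and_conjCondition
    (H₁ H₂ : Type) [AddCommGroup H₁] [Module ℂ H₁] [FiniteDimensional ℂ H₁]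
    [AddCommGroup H₂] [Module ℂ H₂] [FiniteDimensional ℂ H₂]
    (σ₁ : ConjInv H₁) (σ₂ : ConjInv H₂)
    (I₁ : ℤ × ℤ → Submodule ℂ H₁) (I₂ : ℤ × ℤ → Submodule ℂ H₂)
    (h₁ : IsBigrading I₁) (hc₁ : ConjCondition σ₁ I₁)
    (h₂ : IsBigrading I₂) (hc₂ : ConjCondition σ₂ I₂)
    (σ : ConjInv (H₁ ⊗[ℂ] H₂))
    (hσ : ∀ (v : H₁) (w : H₂), σ.toFun (v ⊗ₜ[ℂ] w) = σ₁.toFun v ⊗ₜ[ℂ] σ₂.toFun w) :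
    IsBigrading (tensorPiece I₁ I₂) ∧ ConjCondition σ (tensorPiece I₁ I₂) :=
  tensorPiece_isBigrading_and_conjCondition_general H₁ H₂ σ₁ σ₂ I₁ I₂ h₁ hc₁ h₂ hc₂ σ hσ
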